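/- arXiv:1905.08691 — 7 statements merged into one kernel-verified Lean document; each statement's English description precedes it below -/
import Mathlib

section
/- Let s be a closed axis-aligned facet contained in the hyperplane {x ∈ ℝ^d : x_k = c}, and let p be a point whose L∞ distance to s is strictly less than its L∞ distance to every point of the boundary ∂s of s. Then the L∞ distance from p to s equals the L∞ distance from p to the hyperplane x_k = c, namely |p_k − c|. -/
/-!
Every point of the hyperplane `H = {x | x k = c}` is at sup-distance at least `|p k - c|`
from `p`, which gives `|p k - c| ≤ infDist p s`. Conversely, if `D := infDist p s` were larger,
take a nearest point `q ∈ s` and the projection `p'` of `p` to `H`, which is at distance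
`|p k - c| < D` from `p` and hence not in `s`. The segment `[q, p']` lies in `H` and, by
convexity of sup-balls, in the closed ball of radius `D` about `p`; being connected, it meets
the relative boundary `s ∩ closure (H \ s)`, at a point at distance at most `D` from `p`,
against the hypothesis.
-/

open Metric

lemma IsPreconnected.inter_closed_inter_closure_nonempty {X : Type*} [TopologicalSpace X]
    {S s t : Set X} (hS : IsPreconnected S) (hs : IsClosed s) (hcover : S ⊆ s ∪ t)
    (hSs : (S ∩ s).Nonempty) (hSt : (S ∩ t).Nonempty) : (S ∩ (s ∩ closure t)).Nonempty :=
  isPreconnected_closed_iff.mp hS s (closure t) hs isClosed_closure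
    (hcover.trans (Set.union_subset_union_right s subset_closure))
    hSs (hSt.mono (Set.inter_subset_inter_right S subset_closure))

lemma convex_setOf_apply_eq {ι : Type*} (k : ι) (c : ℝ) : Convex ℝ {x : ι → ℝ | x k = c} :=
  convex_hyperplane (LinearMap.proj (R := ℝ) (φ := fun _ => ℝ) k).isLinear c

section PiSupDist

variable {ι : Type*} [Fintype ι]

lemma dist_update_self_le [DecidableEq ι] (p : ι → ℝ) (k : ι) (c : ℝ) :
    dist p (Function.update p k c) ≤ |p k - c| := by
  refine (dist_pi_le_iff (abs_nonneg _)).mpr fun i => ?_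
  rcases eq_or_ne i k with rfl | hik
  · simp [Real.dist_eq]
  · simp [Function.update_of_ne hik]

lemma abs_sub_le_infDist_of_subset_setOf_apply_eq {s : Set (ι → ℝ)} {k : ι} {c : ℝ}
    (hne : s.Nonempty) (hsub : s ⊆ {x | x k = c}) (p : ι → ℝ) :
    |p k - c| ≤ infDist p s := by
  refine (le_infDist hne).mpr fun q hq => ?_
  have hqk : q k = c := hsub hq
  simpa [Real.dist_eq, hqk] using dist_le_pi_dist p q k

end PiSupDist

/-- If the L∞ distance from `p` to a facet `s` (a nonempty compact
subset of the hyperplane `x k = c`) is strictly less than the distance from `p`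
to every point of the relative boundary of `s`, then the distance from `p` to
`s` equals the distance `|p k - c|` to the hyperplane. -/
theorem stmt_0 {d : ℕ} (k : Fin d) (c : ℝ)
    (s : Set (Fin d → ℝ)) (hne : s.Nonempty) (hcpt : IsCompact s)
    (hsub : s ⊆ {x : Fin d → ℝ | x k = c})
    (p : Fin d → ℝ)
    (hp : ∀ q ∈ s ∩ closure ({x : Fin d → ℝ | x k = c} \ s),
      Metric.infDist p s < dist p q) :
    Metric.infDist p s = |p k - c| := by
  refine le_antisymm ?_ (abs_sub_le_infDist_of_subset_setOf_apply_eq hne hsub p)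
  by_contra! hlt
  set H := {x : Fin d → ℝ | x k = c}
  set p' := Function.update p k c
  obtain ⟨q, hq, hqD⟩ := hcpt.exists_infDist_eq_dist hne p
  have hpp' : dist p p' < infDist p s := (dist_update_self_le p k c).trans_lt hlt
  have hp's : p' ∉ s := fun h => (infDist_le_dist_of_mem h).not_gt hpp'
  have hp'H : p' ∈ H := show p' k = c from Function.update_self k c p
  have hsegH : segment ℝ q p' ⊆ H :=
    (convex_setOf_apply_eq k c).segment_subset (hsub hq) hp'H
  have hsegBall : segment ℝ q p' ⊆ closedBall p (infDist p s) :=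
    (convex_closedBall p _).segment_subset (mem_closedBall'.mpr hqD.ge)
      (mem_closedBall'.mpr hpp'.le)
  obtain ⟨r, hrseg, hrs, hrcl⟩ :=
    (convex_segment q p').isPreconnected.inter_closed_inter_closure_nonempty (t := H \ s)
      hcpt.isClosed (fun x hx => (em (x ∈ s)).imp_right fun h => ⟨hsegH hx, h⟩)
      ⟨q, left_mem_segment ℝ q p', hq⟩ ⟨p', right_mem_segment ℝ q p', hp'H, hp's⟩
  exact (hp r ⟨hrs, hrcl⟩).not_ge (mem_closedBall'.mp (hsegBall hrseg))
end

section
/- Let s be a compact subset of the hyperplane {x ∈ ℝ^d : x_k = c} and p ∉ aff(s) a point with μ∞(p,s) > |p_k − c|. Then the infimum defining μ∞(p,s) is attained at a point q of the relative boundary of s, and moreover μ∞(p,q) = |p_j − q_j| for some coordinate j ≠ k. -/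
/-!
Take a nearest point `q ∈ s` to `p`. Moving `q` a little towards the foot
`update p k c` of `p` on the hyperplane stays in the hyperplane, shrinks every coordinate
gap `|p i - q i|` with `i ≠ k` by the factor `1 - t`, and leaves the `k`-th gap equal to
`|p k - c|`, which is already below `μ∞(p, q)`. These points are strictly closer to `p` than
`μ∞(p, s)`, hence lie outside `s`, and they tend to `q`. The same comparison shows that the
coordinate realizing `μ∞(p, q)` is not `k`.
-/

open AffineMap Filter Topology

section

variable {ι : Type*} [Fintype ι] [DecidableEq ι]

lemma dist_lineMap_update_lt {p q : ι → ℝ} {k : ι} {c : ℝ} (hqk : q k = c)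
    (hfar : |p k - c| < dist p q) {t : ℝ} (ht₀ : 0 < t) (ht₁ : t ≤ 1) :
    dist p (lineMap q (Function.update p k c) t) < dist p q := by
  have hpos : 0 < dist p q := (abs_nonneg _).trans_lt hfar
  refine (dist_pi_lt_iff hpos).2 fun i => ?_
  rw [pi_lineMap_apply]
  by_cases hik : i = k
  · subst hik
    rwa [Function.update_self, hqk, lineMap_same_apply, Real.dist_eq]
  · rw [Function.update_of_ne hik, dist_comm, dist_lineMap_right,
      Real.norm_of_nonneg (by linarith), dist_comm]
    calc (1 - t) * dist (p i) (q i) ≤ (1 - t) * dist p q :=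
          mul_le_mul_of_nonneg_left (dist_le_pi_dist p q i) (by linarith)
      _ < dist p q := by nlinarith

lemma mem_closure_hyperplane_diff_of_infDist_eq {s : Set (ι → ℝ)} {k : ι} {c : ℝ}
    {p q : ι → ℝ} (hqk : q k = c) (hmin : Metric.infDist p s = dist p q)
    (hfar : |p k - c| < dist p q) :
    q ∈ closure ({x : ι → ℝ | x k = c} \ s) := by
  set r := Function.update p k c
  have hlim : Tendsto (lineMap q r) (𝓝[>] (0 : ℝ)) (𝓝 q) := by
    simpa using (lineMap_continuous (p := q) (q := r)).tendsto' 0 q (by simp)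
      |>.mono_left nhdsWithin_le_nhds
  refine mem_closure_of_tendsto hlim ?_
  filter_upwards [Ioc_mem_nhdsGT one_pos] with t ⟨ht₀, ht₁⟩
  refine ⟨?_, fun hts => ?_⟩
  · simp [r, pi_lineMap_apply, hqk]
  · exact (Metric.infDist_le_dist_of_mem hts).not_gt
      (hmin ▸ dist_lineMap_update_lt hqk hfar ht₀ ht₁)

end

theorem stmt_1_general {d : ℕ} (k : Fin d) (c : ℝ)
    (s : Set (Fin d → ℝ)) (hne : s.Nonempty) (hcpt : IsCompact s)
    (hsub : s ⊆ {x : Fin d → ℝ | x k = c})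
    (p : Fin d → ℝ)
    (hfar : |p k - c| < Metric.infDist p s) :
    ∃ q ∈ s ∩ closure ({x : Fin d → ℝ | x k = c} \ s),
      dist p q = Metric.infDist p s ∧
      ∃ j : Fin d, j ≠ k ∧ dist p q = |p j - q j| := by
  obtain ⟨q, hqs, hmin⟩ := hcpt.exists_infDist_eq_dist hne p
  have hqk : q k = c := hsub hqs
  rw [hmin] at hfar
  obtain ⟨⟨j, hj⟩, -⟩ := (dist_pi_eq_iff ((abs_nonneg _).trans_lt hfar)).1 rfl
  have hjk : j ≠ k := by
    rintro rfl
    rw [← hj, hqk, Real.dist_eq] at hfar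
    exact hfar.false
  exact ⟨q, ⟨hqs, mem_closure_hyperplane_diff_of_infDist_eq hqk hmin hfar⟩, hmin.symm,
    j, hjk, by rw [← hj, Real.dist_eq]⟩

/-- For a compact facet `s` in the hyperplane `x k = c` and a point
`p` off the hyperplane with `μ∞(p,s) > |p k - c|`, the distance to `s` is
attained at a point `q` of the relative boundary of `s`, and moreover
`μ∞(p,q) = |p j - q j|` for some coordinate `j ≠ k`. -/
theorem stmt_1 {d : ℕ} (k : Fin d) (c : ℝ)
    (s : Set (Fin d → ℝ)) (hne : s.Nonempty) (hcpt : IsCompact s)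
    (hsub : s ⊆ {x : Fin d → ℝ | x k = c})
    (p : Fin d → ℝ) (hpk : p k ≠ c)
    (hfar : |p k - c| < Metric.infDist p s) :
    ∃ q ∈ s ∩ closure ({x : Fin d → ℝ | x k = c} \ s),
      dist p q = Metric.infDist p s ∧
      ∃ j : Fin d, j ≠ k ∧ dist p q = |p j - q j| :=
  stmt_1_general k c s hne hcpt hsub p hfar
end

section
/- Let s ⊆ ℝ^d and define the zone Z(s) = {p ∈ ℝ^d : μ∞(p,s) = μ∞(p, aff(s))} where s lies in the hyperplane aff(s) = {x : x_k = c}. For any p ∈ Z(s) with q ∈ s achieving μ∞(p,q) = μ∞(p,s), and any t ∈ [0,1], the point w = t·p + (1−t)·q also lies in Z(s) and μ∞(w,s) = t·μ∞(p,s). -/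
/-! The coordinate `x k` is 1-Lipschitz for the sup metric, so every point is at distance at least
`|x k - c|` from a set in the hyperplane `x k = c`. Moving `p` towards its nearest point `q ∈ s`
scales both `dist w q` and `w k - c` by `t`; the first bounds `infDist w s` from above, the second
from below, and for points of the zone the two bounds coincide. -/

open Metric AffineMap

theorem abs_apply_sub_le_infDist {ι : Type*} [Fintype ι] {s : Set (ι → ℝ)} {k : ι} {c : ℝ}
    (hne : s.Nonempty) (hsub : s ⊆ {y | y k = c}) (x : ι → ℝ) :
    |x k - c| ≤ infDist x s := by
  refine (le_infDist hne).2 fun y hy => ?_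
  calc |x k - c| = dist (x k) (y k) := by rw [hsub hy, Real.dist_eq]
    _ ≤ dist x y := dist_le_pi_dist x y k

theorem stmt_2_general {d : ℕ} (k : Fin d) (c : ℝ)
    (s : Set (Fin d → ℝ))
    (hsub : s ⊆ {x : Fin d → ℝ | x k = c})
    (p q : Fin d → ℝ) (hq : q ∈ s)
    (hzone : Metric.infDist p s = |p k - c|)
    (hattain : dist p q = Metric.infDist p s)
    (t : ℝ) (ht : t ∈ Set.Icc (0:ℝ) 1) :
    Metric.infDist (t • p + (1 - t) • q) s = |(t • p + (1 - t) • q) k - c| ∧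
    Metric.infDist (t • p + (1 - t) • q) s = t * Metric.infDist p s := by
  set w := t • p + (1 - t) • q
  have hw : w = lineMap q p t := by rw [lineMap_apply_module, add_comm]
  have hdist : dist w q = t * infDist p s := by
    rw [hw, dist_lineMap_left, Real.norm_of_nonneg ht.1, dist_comm, hattain]
  have hcoord : |w k - c| = t * infDist p s := by
    have hwk : w k - c = t * (p k - c) := by
      simp only [w, Pi.add_apply, Pi.smul_apply, smul_eq_mul, show q k = c from hsub hq]
      ring
    rw [hwk, abs_mul, abs_of_nonneg ht.1, hzone]
  have key : infDist w s = t * infDist p s :=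
    le_antisymm (hdist ▸ infDist_le_dist_of_mem hq)
      (hcoord ▸ abs_apply_sub_le_infDist ⟨q, hq⟩ hsub w)
  exact ⟨key.trans hcoord.symm, key⟩

/-- For a point `p` in the zone `Z(s)` of a facet `s` in the
hyperplane `x k = c`, with the distance attained at `q ∈ s`, every convex
combination `w = t•p + (1-t)•q` is again in `Z(s)` and `μ∞(w,s) = t·μ∞(p,s)`. -/
theorem stmt_2 {d : ℕ} (k : Fin d) (c : ℝ)
    (s : Set (Fin d → ℝ)) (hne : s.Nonempty) (hcpt : IsCompact s)
    (hsub : s ⊆ {x : Fin d → ℝ | x k = c})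
    (p q : Fin d → ℝ) (hq : q ∈ s)
    (hzone : Metric.infDist p s = |p k - c|)
    (hattain : dist p q = Metric.infDist p s)
    (t : ℝ) (ht : t ∈ Set.Icc (0:ℝ) 1) :
    Metric.infDist (t • p + (1 - t) • q) s = |(t • p + (1 - t) • q) k - c| ∧
    Metric.infDist (t • p + (1 - t) • q) s = t * Metric.infDist p s :=
  stmt_2_general k c s hsub p q hq hzone hattain t ht
end

section
/- Let S be a finite family of nonempty compact sites in ℝ^d with the L∞ metric, and for s ∈ S let V(s) = {p : ∀ s' ∈ S, s' ≠ s → μ∞(p,s) < μ∞(p,s')}. Then the closure of V(s) is weakly star-shaped with respect to s: for every p in the closure of V(s) there exists q ∈ s such that every point of the open segment (p,q) lies in the closure of V(s). -/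
/-!
If `q` is a point of the site `s` nearest to `x`, then along the segment from `x` to `q` the
distance to `s` drops at least as fast as the distance travelled, while the distance to any
other site drops at most that fast; so the segment stays in the Voronoi region of `s`. This makes
the region weakly star-shaped with respect to `s`, and since `s` is compact, the nearest points
of a sequence converging to a point of the closure have a convergent subsequence, whose segments
converge to a segment lying in the closure.
-/

open Metric Filter Topology

variable {E : Type*}

def WeaklyStarShaped [AddCommGroup E] [Module ℝ E] (V K : Set E) : Prop :=
  ∀ x ∈ V, ∃ q ∈ K, openSegment ℝ x q ⊆ V

def voronoiCell [PseudoMetricSpace E] (S : Set (Set E)) (s : Set E) : Set E :=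
  {x | ∀ s' ∈ S, s' ≠ s → infDist x s < infDist x s'}

theorem WeaklyStarShaped.closure [TopologicalSpace E] [FirstCountableTopology E]
    [AddCommGroup E] [Module ℝ E] [ContinuousAdd E] [ContinuousSMul ℝ E] {V K : Set E}
    (hV : WeaklyStarShaped V K) (hK : IsCompact K) :
    WeaklyStarShaped (closure V) K := by
  intro p hp
  obtain ⟨u, hu, hup⟩ := mem_closure_iff_seq_limit.1 hp
  choose q hqK hqV using fun n => hV (u n) (hu n)
  obtain ⟨q₀, hq₀, φ, hφ, hqq₀⟩ := hK.tendsto_subseq hqK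
  refine ⟨q₀, hq₀, ?_⟩
  rintro _ ⟨a, b, ha, hb, hab, rfl⟩
  have hlim : Tendsto (fun n => a • u (φ n) + b • q (φ n)) atTop (𝓝 (a • p + b • q₀)) :=
    ((hup.comp hφ.tendsto_atTop).const_smul a).add (hqq₀.const_smul b)
  exact mem_closure_of_tendsto hlim
    (Eventually.of_forall fun n => hqV (φ n) ⟨a, b, ha, hb, hab, rfl⟩)

section NormedSpace

variable [NormedAddCommGroup E] [NormedSpace ℝ E]

theorem infDist_lt_infDist_of_mem_segment {s s' : Set E} {x q z : E} (hq : q ∈ s)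
    (hxq : infDist x s = dist x q) (hz : z ∈ segment ℝ x q)
    (hx : infDist x s < infDist x s') :
    infDist z s < infDist z s' := by
  have hsplit := dist_add_dist_of_mem_segment hz
  calc infDist z s ≤ dist z q := infDist_le_dist_of_mem hq
    _ = infDist x s - dist x z := by linarith
    _ < infDist x s' - dist x z := by linarith
    _ ≤ infDist z s' := by linarith [infDist_le_infDist_add_dist (x := x) (y := z) (s := s')]

theorem segment_subset_voronoiCell {S : Set (Set E)} {s : Set E} {x q : E}
    (hx : x ∈ voronoiCell S s) (hq : q ∈ s) (hxq : infDist x s = dist x q) :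
    segment ℝ x q ⊆ voronoiCell S s :=
  fun _ hz s' hs' hne => infDist_lt_infDist_of_mem_segment hq hxq hz (hx s' hs' hne)

theorem weaklyStarShaped_voronoiCell {S : Set (Set E)} {s : Set E} (hs : IsCompact s)
    (hne : s.Nonempty) : WeaklyStarShaped (voronoiCell S s) s := fun x hx =>
  let ⟨q, hq, hxq⟩ := hs.exists_infDist_eq_dist hne x
  ⟨q, hq, (openSegment_subset_segment ℝ x q).trans (segment_subset_voronoiCell hx hq hxq)⟩

end NormedSpace

/-- The closure of the Voronoi region of a site `s` (among a
finite family of nonempty compact sites in ℝ^d with the L∞ metric) is weakly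
star-shaped with respect to `s`. -/
theorem stmt_4 {d : ℕ} (S : Finset (Set (Fin d → ℝ)))
    (hne : ∀ s ∈ S, s.Nonempty) (hcpt : ∀ s ∈ S, IsCompact s)
    (s : Set (Fin d → ℝ)) (hs : s ∈ S)
    (p : Fin d → ℝ)
    (hp : p ∈ closure {x : Fin d → ℝ |
      ∀ s' ∈ S, s' ≠ s → Metric.infDist x s < Metric.infDist x s'}) :
    ∃ q ∈ s, ∀ t ∈ Set.Ioo (0:ℝ) 1,
      t • p + (1 - t) • q ∈ closure {x : Fin d → ℝ |
        ∀ s' ∈ S, s' ≠ s → Metric.infDist x s < Metric.infDist x s'} := by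
  have hV : WeaklyStarShaped (closure (voronoiCell (S : Set (Set (Fin d → ℝ))) s)) s :=
    (weaklyStarShaped_voronoiCell (hcpt s hs) (hne s hs)).closure (hcpt s hs)
  obtain ⟨q, hq, hseg⟩ := hV p hp
  exact ⟨q, hq, fun t ⟨ht₀, ht₁⟩ => hseg ⟨t, 1 - t, ht₀, by linarith, by ring, rfl⟩⟩
end

section
/- Let S be a finite family of nonempty sites in ℝ^d with the L∞ metric. For a cell C (an axis-aligned closed box with center p_C and L∞-radius r_C) with p_C attaining distance δ_C = min_{s∈S} μ∞(p_C, s), every site s whose closed Voronoi region intersects C satisfies μ∞(p_C, s) ≤ 2·r_C + δ_C. -/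
theorem Metric.infDist_le_two_mul_dist_add_infDist_of_infDist_le {α : Type*}
    [PseudoMetricSpace α] {p q : α} {s t : Set α}
    (h : Metric.infDist p s ≤ Metric.infDist p t) :
    Metric.infDist q s ≤ 2 * dist q p + Metric.infDist q t := by
  have hs : Metric.infDist q s ≤ Metric.infDist p s + dist q p :=
    Metric.infDist_le_infDist_add_dist
  have ht : Metric.infDist p t ≤ Metric.infDist q t + dist q p := by
    rw [dist_comm]
    exact Metric.infDist_le_infDist_add_dist
  linarith

theorem stmt_8_general {d : ℕ} (S : Finset (Set (Fin d → ℝ)))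
    (pC p : Fin d → ℝ) (rC δ : ℝ)
    (hp : dist pC p ≤ rC)
    (hδ : ∃ sstar ∈ S, δ = Metric.infDist pC sstar ∧
      ∀ s' ∈ S, δ ≤ Metric.infDist pC s')
    (s : Set (Fin d → ℝ))
    (hmin : ∀ s' ∈ S, Metric.infDist p s ≤ Metric.infDist p s') :
    Metric.infDist pC s ≤ 2 * rC + δ := by
  obtain ⟨sstar, hsstar, rfl, -⟩ := hδ
  calc Metric.infDist pC s ≤ 2 * dist pC p + Metric.infDist pC sstar :=
        Metric.infDist_le_two_mul_dist_add_infDist_of_infDist_le (hmin sstar hsstar)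
    _ ≤ 2 * rC + Metric.infDist pC sstar := by linarith

/-- Lemma 3(a), soundness of the soft predicate, first case:
if `p` lies in the cell `C` (center `p_C`, L∞-radius `r_C`) and `p` belongs to
the closed Voronoi region of `s` (i.e. `μ∞(p,s) ≤ μ∞(p,s')` for all sites),
and `δ = min_{s'∈S} μ∞(p_C, s')`, then `μ∞(p_C, s) ≤ 2·r_C + δ`. -/
theorem stmt_8 {d : ℕ} (S : Finset (Set (Fin d → ℝ)))
    (hne : ∀ s ∈ S, s.Nonempty)
    (pC p : Fin d → ℝ) (rC δ : ℝ)
    (hp : dist pC p ≤ rC)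
    (hδ : ∃ sstar ∈ S, δ = Metric.infDist pC sstar ∧
      ∀ s' ∈ S, δ ≤ Metric.infDist pC s')
    (s : Set (Fin d → ℝ)) (hs : s ∈ S)
    (hmin : ∀ s' ∈ S, Metric.infDist p s ≤ Metric.infDist p s') :
    Metric.infDist pC s ≤ 2 * rC + δ :=
  stmt_8_general S pC p rC δ hp hδ s hmin
end

section
/- Let s be a segment on the line {(x, c)} in ℝ² and p = (p₁,p₂) a point. Define the interval I_{p,s} on the line, centered at the projection (p₁, c) with radius |p₂ − c|. Then p ∈ Z(s) (i.e., μ∞(p,s) = |p₂ − c|) if and only if I_{p,s} ∩ s ≠ ∅. -/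
/-!
For the sup metric, `dist p (a, c) = max |p₁ - a| |p₂ - c|`, so the distance from `p` to the
segment `[x₀, x₁] × {c}` is `max (dist p₁ [x₀, x₁]) |p₂ - c|`. It equals `|p₂ - c|` exactly when
`[x₀, x₁]` comes within `|p₂ - c|` of `p₁`, i.e. meets `I_{p,s}`; compactness provides the
point realising the distance.
-/

open Metric Set

theorem Metric.infDist_prod_singleton {α β : Type*} [PseudoMetricSpace α] [PseudoMetricSpace β]
    (p : α × β) {A : Set α} (hA : A.Nonempty) (b : β) :
    infDist p (A ×ˢ {b}) = max (infDist p.1 A) (dist p.2 b) := by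
  have hS : (A ×ˢ ({b} : Set β)).Nonempty := hA.prod (singleton_nonempty b)
  apply le_antisymm
  · refine le_of_forall_gt fun r hr => ?_
    obtain ⟨a, ha, har⟩ := (infDist_lt_iff hA).1 (lt_of_le_of_lt (le_max_left _ _) hr)
    calc infDist p (A ×ˢ {b}) ≤ dist p (a, b) := infDist_le_dist_of_mem ⟨ha, rfl⟩
      _ = max (dist p.1 a) (dist p.2 b) := Prod.dist_eq
      _ < r := max_lt har (lt_of_le_of_lt (le_max_right _ _) hr)
  · refine (le_infDist hS).2 ?_
    rintro ⟨a, _⟩ ⟨ha, rfl⟩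
    rw [Prod.dist_eq]
    exact max_le_max_right _ (infDist_le_dist_of_mem ha)

theorem IsCompact.infDist_le_iff {α : Type*} [PseudoMetricSpace α] {s : Set α} (hs : IsCompact s)
    (hne : s.Nonempty) (x : α) {r : ℝ} : infDist x s ≤ r ↔ ∃ y ∈ s, dist x y ≤ r := by
  constructor
  · intro hr
    obtain ⟨y, hy, hxy⟩ := hs.exists_infDist_eq_dist hne x
    exact ⟨y, hy, hxy ▸ hr⟩
  · rintro ⟨y, hy, hxy⟩
    exact (infDist_le_dist_of_mem hy).trans hxy

/-- correctness of `inZone`: `p` belongs to the zone of the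
horizontal segment `s = [x₀,x₁] × {c}` iff the interval `I_{p,s}` centered at
the projection `p.1` with radius `|p.2 − c|` meets `[x₀,x₁]`. -/
theorem stmt_13 (x₀ x₁ c : ℝ) (h : x₀ ≤ x₁) (p : ℝ × ℝ) :
    Metric.infDist p (Set.Icc x₀ x₁ ×ˢ ({c} : Set ℝ)) = |p.2 - c| ↔
      (Set.Icc (p.1 - |p.2 - c|) (p.1 + |p.2 - c|) ∩ Set.Icc x₀ x₁).Nonempty := by
  have hne : (Icc x₀ x₁).Nonempty := nonempty_Icc.2 h
  rw [infDist_prod_singleton p hne, Real.dist_eq, max_eq_right_iff,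
    isCompact_Icc.infDist_le_iff hne, ← Real.closedBall_eq_Icc]
  simp only [Set.Nonempty, mem_inter_iff, mem_closedBall']
  exact exists_congr fun y => and_comm
end

section
/- Let s be a compact subset of the plane {x ∈ ℝ³ : x₃ = c} and let C be an axis-aligned closed box with center p_C and L∞-radius r_C, with top and bottom facets f₁, f₂ (those parallel to the plane x₃ = c). Let ρᵢ = μ∞(fᵢ, {x₃=c}) and p'_C the orthogonal projection of p_C onto the plane x₃ = c. Then Z(s) ∩ C ≠ ∅ if and only if there exists i ∈ {1,2} with B∞(p'_C, r_C + ρᵢ) ∩ s ≠ ∅, where Z(s) = {p : μ∞(p,s) = |p₃ − c|} and B∞ denotes a closed L∞ ball (taken within the plane x₃ = c). -/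
/-!
A point `p` always satisfies `μ∞(p, s) ≥ |p₃ - c|`, so `p ∈ Z(s)` exactly when some `q ∈ s` lies
within `|p₃ - c|` of `p`. For `p` in the cell, the cell's horizontal slices are sup-balls of radius
`r_C` around the projection of `p_C`, so such a `q` lies within `r_C + |p₃ - c|` of `p'_C`, and
`|p₃ - c|` is largest on one of the two horizontal facets. Conversely, if `q ∈ s` is within
`r_C + ρᵢ` of `p'_C`, the planar balls of radii `r_C` around `p'_C` and `ρᵢ` around `q` meet; lifting
a common point to the height of `fᵢ` gives a point of `C` at distance exactly `ρᵢ` from `s`.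
-/

open Metric Function

theorem Metric.closedBall_max {α : Type*} [PseudoMetricSpace α] (x : α) (a b : ℝ) :
    closedBall x (max a b) = closedBall x a ∪ closedBall x b := by
  ext y
  simp only [mem_closedBall, le_max_iff, Set.mem_union]

section PiDist

variable {ι : Type*} [Fintype ι] [DecidableEq ι] {β : ι → Type*} [∀ i, PseudoMetricSpace (β i)]

theorem dist_update_update_le (x y : ∀ i, β i) (k : ι) (a b : β k) :
    dist (update x k a) (update y k b) ≤ max (dist x y) (dist a b) := by
  refine (dist_pi_le_iff (le_max_of_le_left dist_nonneg)).2 fun j => ?_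
  rcases eq_or_ne j k with rfl | hj
  · simp
  · rw [update_of_ne hj, update_of_ne hj]
    exact le_max_of_le_left (dist_le_pi_dist x y j)

theorem dist_update_apply_le (x y : ∀ i, β i) (k : ι) :
    dist (update x k (y k)) y ≤ dist x y := by
  simpa using dist_update_update_le x y k (y k) (y k)

end PiDist

theorem abs_sub_le_max_abs_sub_of_abs_sub_le {t a r c : ℝ} (h : |t - a| ≤ r) :
    |t - c| ≤ max |a + r - c| |a - r - c| := by
  obtain ⟨h₁, h₂⟩ := abs_le.1 h
  rw [max_comm]
  exact abs_le_max_abs_abs (by linarith) (by linarith)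

/-- The paper's `Z(s)`, for a site `s` in the hyperplane `x k = c`. -/
def zone {ι : Type*} [Fintype ι] (s : Set (ι → ℝ)) (k : ι) (c : ℝ) : Set (ι → ℝ) :=
  {p | infDist p s = |p k - c|}

section Zone

variable {ι : Type*} [Fintype ι] {s : Set (ι → ℝ)} {k : ι} {c : ℝ}

theorem abs_sub_le_infDist (hne : s.Nonempty) (hsub : s ⊆ {x | x k = c}) (p : ι → ℝ) :
    |p k - c| ≤ infDist p s :=
  (le_infDist hne).2 fun y hy => by
    have hyk : y k = c := hsub hy
    simpa [Real.dist_eq, hyk] using dist_le_pi_dist p y k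

theorem mem_zone_iff (hcpt : IsCompact s) (hne : s.Nonempty) (hsub : s ⊆ {x | x k = c})
    {p : ι → ℝ} : p ∈ zone s k c ↔ ∃ q ∈ s, dist p q ≤ |p k - c| := by
  constructor
  · intro hp
    obtain ⟨q, hq, hdist⟩ := hcpt.exists_infDist_eq_dist hne p
    exact ⟨q, hq, by rw [← hdist, hp]⟩
  · rintro ⟨q, hq, hpq⟩
    exact le_antisymm ((infDist_le_dist_of_mem hq).trans hpq) (abs_sub_le_infDist hne hsub p)

variable [DecidableEq ι]

theorem dist_update_le_add {pC p q : ι → ℝ} {r ρ : ℝ} (hp : p ∈ closedBall pC r)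
    (hq : q k = c) (hpq : dist p q ≤ ρ) : dist (update pC k c) q ≤ r + ρ :=
  calc dist (update pC k c) q = dist (update pC k (q k)) q := by rw [hq]
    _ ≤ dist pC q := dist_update_apply_le pC q k
    _ ≤ dist pC p + dist p q := dist_triangle _ _ _
    _ ≤ r + ρ := add_le_add (by rwa [dist_comm]) hpq

theorem exists_mem_closedBall_apply_eq_dist_le {pC q : ι → ℝ} {r t : ℝ} (hq : q k = c)
    (ht : |t - pC k| ≤ r) (hd : dist (update pC k c) q ≤ r + |t - c|) :
    ∃ p ∈ closedBall pC r, p k = t ∧ dist p q ≤ |t - c| := by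
  obtain ⟨z, hz, hzq⟩ :=
    exists_dist_le_le ((abs_nonneg _).trans ht) (abs_nonneg (t - c)) (by linarith)
  refine ⟨update z k t, ?_, update_self _ _ _, ?_⟩
  · calc dist (update z k t) pC
          = dist (update z k t) (update (update pC k c) k (pC k)) := by simp
      _ ≤ max (dist z (update pC k c)) (dist t (pC k)) := dist_update_update_le _ _ _ _ _
      _ ≤ r := max_le (by rwa [dist_comm]) (by rwa [Real.dist_eq])
  · calc dist (update z k t) q = dist (update z k t) (update q k c) := by rw [← hq, update_eq_self]
      _ ≤ max (dist z q) (dist t c) := dist_update_update_le _ _ _ _ _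
      _ ≤ |t - c| := max_le hzq (Real.dist_eq t c).le

theorem zone_inter_closedBall_nonempty_iff (hcpt : IsCompact s) (hne : s.Nonempty)
    (hsub : s ⊆ {x | x k = c}) {pC : ι → ℝ} {r : ℝ} (hr : 0 ≤ r) :
    (zone s k c ∩ closedBall pC r).Nonempty ↔
      (closedBall (update pC k c) (r + max |pC k + r - c| |pC k - r - c|) ∩ s).Nonempty := by
  constructor
  · rintro ⟨p, hpZ, hpC⟩
    obtain ⟨q, hq, hpq⟩ := (mem_zone_iff hcpt hne hsub).1 hpZ
    have hpk : |p k - pC k| ≤ r := by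
      simpa [Real.dist_eq] using (dist_le_pi_dist p pC k).trans hpC
    refine ⟨q, ?_, hq⟩
    rw [mem_closedBall, dist_comm]
    exact dist_update_le_add hpC (hsub hq) (hpq.trans (abs_sub_le_max_abs_sub_of_abs_sub_le hpk))
  · rintro ⟨q, hqB, hq⟩
    obtain ⟨t, ht, hmax⟩ : ∃ t, |t - pC k| ≤ r ∧ max |pC k + r - c| |pC k - r - c| = |t - c| := by
      rcases max_choice |pC k + r - c| |pC k - r - c| with h | h
      · exact ⟨pC k + r, by simp [abs_of_nonneg hr], h⟩
      · exact ⟨pC k - r, by simp [abs_of_nonneg hr], h⟩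
    rw [mem_closedBall, dist_comm, hmax] at hqB
    obtain ⟨p, hpC, rfl, hpq⟩ := exists_mem_closedBall_apply_eq_dist_le (hsub hq) ht hqB
    exact ⟨p, (mem_zone_iff hcpt hne hsub).2 ⟨q, hq, hpq⟩, hpC⟩

end Zone

/-- Lemma 8, correctness of `ZoneInCell`: for a compact site `s`
in the plane `x 2 = c` of ℝ³ and a cubical cell `C` with center `p_C` and
L∞-radius `r_C`, the zone `Z(s)` meets `C` iff for some facet `f_i` of `C`
parallel to the plane (at distance `ρ_i` from it), the closed L∞ ball centered
at the projection `p'_C` of `p_C` with radius `r_C + ρ_i` meets `s`. -/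
theorem stmt_14 (c : ℝ) (s : Set (Fin 3 → ℝ)) (hne : s.Nonempty)
    (hcpt : IsCompact s) (hsub : s ⊆ {x : Fin 3 → ℝ | x 2 = c})
    (pC : Fin 3 → ℝ) (rC : ℝ) (hr : 0 ≤ rC)
    (ρ₁ ρ₂ : ℝ) (hρ₁ : ρ₁ = |pC 2 + rC - c|) (hρ₂ : ρ₂ = |pC 2 - rC - c|) :
    ({p : Fin 3 → ℝ | Metric.infDist p s = |p 2 - c|} ∩
        Metric.closedBall pC rC).Nonempty ↔
      (Metric.closedBall (Function.update pC 2 c) (rC + ρ₁) ∩ s).Nonempty ∨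
      (Metric.closedBall (Function.update pC 2 c) (rC + ρ₂) ∩ s).Nonempty := by
  subst hρ₁ hρ₂
  rw [← Set.union_nonempty, ← Set.union_inter_distrib_right, ← closedBall_max, ← add_max]
  exact zone_inter_closedBall_nonempty_iff hcpt hne hsub hr
end
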